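/- Let f : F_2^{2n} → ℝ≥0 with Σ_α f(y,α) ≤ C for every y ∈ F_2^n for some constant C, and suppose a linear map ℓ : F_2^n → F_2^n satisfies Σ_{y} f(y, ℓ(y)) = η · 2^n, where additionally f(y,α) = 0 whenever ⟨y,α⟩ = 1, and f satisfies the symplectic Fourier inversion identity f(z) = (1/2^n)Σ_{z'} (-1)^{[z,z']} f(z') with normalization (1/2^n)Σ_z f(z) = 1. Then there exists a symmetric linear map ℓ' : F_2^n → F_2^n (i.e., ℓ' = ℓ'^t) with Σ_y f(y, ℓ'(y)) ≥ η² · 2^n. -/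

import Mathlib

/-!
Write `R(y) = f(y, ℓ y)` and let `M` be the matrix of `ℓ`. The inversion formula for `f` expands
`R` in characters with the coefficients `R̂(α) = 2⁻ⁿ ∑_y f(y, Mᵀ y + α)`, which are nonnegative and
sum to `1`. Since `f` vanishes where `⟨y, α⟩ = 1`, `R` is unchanged by the quadratic phase
`H(y) = (-1)^⟨y, M y⟩`, so `∑_α R̂(α) Ĥ(α) = 2⁻ⁿ ∑_y R(y) = η`. Completing the square shows that
`Ĥ²` is the Walsh transform of `H` restricted to `K = {w | Mᵀ w = M w}`, hence Jensen's inequality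
`(∑ R̂ Ĥ)² ≤ ∑ R̂ Ĥ²` gives `η² 2ⁿ ≤ ∑_{w ∈ K} f(w, M w)`. Finally the form `⟨x, M y⟩` is symmetric
on `K`, so `M` agrees on `K` with a symmetric matrix, built from a projection onto `K`.
-/

open Finset
open scoped Classical

abbrev BV (n : ℕ) := Fin n → ZMod 2
abbrev Pt (n : ℕ) := BV n × BV n

def dotp {n : ℕ} (x y : BV n) : ZMod 2 := ∑ i, x i * y i
def symp {n : ℕ} (z w : Pt n) : ZMod 2 := dotp z.1 w.2 + dotp w.1 z.2
def sgn (b : ZMod 2) : ℝ := (-1 : ℝ) ^ b.val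

open Matrix

lemma Matrix.isSymm_of_transpose_mul_eq {ι K : Type*} [Fintype ι] [CommRing K]
    (M P : Matrix ι ι K) (hMP : Mᵀ * P = M * P) :
    (M * P + Pᵀ * Mᵀ - Pᵀ * M * P).IsSymm := by
  simp only [IsSymm, transpose_sub, transpose_add, transpose_mul, transpose_transpose,
    Matrix.mul_assoc, hMP]
  abel

lemma Matrix.exists_isSymm_mulVec_eq {ι K : Type*} [Fintype ι] [DecidableEq ι] [Field K]
    (M : Matrix ι ι K) :
    ∃ S : Matrix ι ι K, S.IsSymm ∧ ∀ w, Mᵀ *ᵥ w = M *ᵥ w → S *ᵥ w = M *ᵥ w := by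
  set W := LinearMap.ker (toLin' (Mᵀ - M))
  have hW {v} : v ∈ W ↔ Mᵀ *ᵥ v = M *ᵥ v := by simp [W, sub_eq_zero]
  obtain ⟨g, hg⟩ := W.subtype.exists_leftInverse_of_injective W.ker_subtype
  set P := LinearMap.toMatrix' (W.subtype ∘ₗ g)
  have hPW (v) : P *ᵥ v ∈ W := by simp [P]
  have hPfix {w} (hw : w ∈ W) : P *ᵥ w = w := by
    simpa [P] using congrArg Subtype.val (LinearMap.congr_fun hg ⟨w, hw⟩)
  have hMP : Mᵀ * P = M * P := by
    refine toLin'.injective (LinearMap.ext fun v => ?_)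
    simpa [← mulVec_mulVec] using hW.mp (hPW v)
  refine ⟨_, isSymm_of_transpose_mul_eq M P hMP, fun w hw => ?_⟩
  rw [sub_mulVec, add_mulVec, ← mulVec_mulVec, ← mulVec_mulVec, ← mulVec_mulVec, hPfix (hW.mpr hw),
    ← mulVec_mulVec, hw]
  abel

lemma Matrix.add_dotProduct_mulVec_add {ι R : Type*} [Fintype ι] [CommRing R]
    (M : Matrix ι ι R) (y w : ι → R) :
    (y + w) ⬝ᵥ M *ᵥ (y + w) = y ⬝ᵥ M *ᵥ y + w ⬝ᵥ M *ᵥ w + y ⬝ᵥ (M *ᵥ w + Mᵀ *ᵥ w) := by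
  rw [mulVec_add, dotProduct_add, add_dotProduct, add_dotProduct, dotProduct_add,
    dotProduct_mulVec w, ← mulVec_transpose, dotProduct_comm (Mᵀ *ᵥ w)]
  abel

section

variable {n : ℕ}

lemma zmod_two_eq_zero_or_one (a : ZMod 2) : a = 0 ∨ a = 1 := by
  revert a; decide

lemma sgn_zero : sgn 0 = 1 := rfl

lemma sgn_one : sgn 1 = -1 := by simp [sgn, ZMod.val_one]

lemma sgn_add (a b : ZMod 2) : sgn (a + b) = sgn a * sgn b := by
  simp only [sgn, ZMod.val_add, ← pow_add]
  exact (neg_one_pow_eq_pow_mod_two _).symm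

lemma sgn_mul_self (a : ZMod 2) : sgn a * sgn a = 1 := by
  rw [← sgn_add, ZModModule.add_self, sgn_zero]

lemma dotp_eq_dotProduct (x y : BV n) : dotp x y = x ⬝ᵥ y := rfl

lemma dotp_toLin'_of_isSymm {S : Matrix (Fin n) (Fin n) (ZMod 2)} (hS : S.IsSymm)
    (x y : BV n) : dotp x (toLin' S y) = dotp (toLin' S x) y := by
  rw [toLin'_apply, toLin'_apply, dotp_eq_dotProduct, dotProduct_mulVec, ← mulVec_transpose,
    hS.eq, dotp_eq_dotProduct, dotProduct_comm]

lemma sum_sgn_dotp (c : BV n) :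
    ∑ y : BV n, sgn (dotp y c) = if c = 0 then 2 ^ n else 0 := by
  split_ifs with hc
  · simp [hc, dotp_eq_dotProduct, sgn_zero]
  · obtain ⟨i, hi⟩ : ∃ i, c i ≠ 0 := Function.ne_iff.mp hc
    have hci : c i = 1 := (zmod_two_eq_zero_or_one _).resolve_left hi
    have hshift (y : BV n) : sgn (dotp (y + Pi.single i 1) c) = -sgn (dotp y c) := by
      rw [dotp_eq_dotProduct, add_dotProduct, single_dotProduct, hci, sgn_add, one_mul, sgn_one,
        mul_neg_one, dotp_eq_dotProduct]
    have := Equiv.sum_comp (Equiv.addRight (Pi.single i 1 : BV n)) fun y => sgn (dotp y c)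
    simp only [Equiv.coe_addRight, hshift, sum_neg_distrib] at this
    linarith

noncomputable def walsh (F : BV n → ℝ) (α : BV n) : ℝ :=
  (2 ^ n)⁻¹ * ∑ y, sgn (dotp y α) * F y

lemma sum_mul_walsh {c R : BV n → ℝ} (hR : ∀ y, R y = ∑ α, sgn (dotp y α) * c α)
    (H : BV n → ℝ) : ∑ α, c α * walsh H α = (2 ^ n)⁻¹ * ∑ y, R y * H y := by
  simp only [walsh, hR, mul_sum, sum_mul]
  rw [sum_comm]
  exact sum_congr rfl fun _ _ => sum_congr rfl fun _ _ => by ring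

def quadPhase (M : Matrix (Fin n) (Fin n) (ZMod 2)) (y : BV n) : ℝ := sgn (dotp y (M *ᵥ y))

lemma quadPhase_add (M : Matrix (Fin n) (Fin n) (ZMod 2)) (y w : BV n) :
    quadPhase M (y + w) = quadPhase M y * quadPhase M w * sgn (dotp y (M *ᵥ w + Mᵀ *ᵥ w)) := by
  simp only [quadPhase, dotp_eq_dotProduct, add_dotProduct_mulVec_add, sgn_add]

lemma sum_sgn_dotp_mulVec_add_transpose (M : Matrix (Fin n) (Fin n) (ZMod 2)) (w : BV n) :
    ∑ y : BV n, sgn (dotp y (M *ᵥ w + Mᵀ *ᵥ w)) = if Mᵀ *ᵥ w = M *ᵥ w then 2 ^ n else 0 := by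
  rw [sum_sgn_dotp]
  exact if_congr (by rw [← ZModModule.sub_eq_add, sub_eq_zero, eq_comm]) rfl rfl

lemma walsh_quadPhase_sq (M : Matrix (Fin n) (Fin n) (ZMod 2)) (α : BV n) :
    walsh (quadPhase M) α ^ 2 =
      walsh (fun w => if Mᵀ *ᵥ w = M *ᵥ w then quadPhase M w else 0) α := by
  have hterm (y w : BV n) :
      sgn (dotp y α) * quadPhase M y * (sgn (dotp (y + w) α) * quadPhase M (y + w)) =
        sgn (dotp w α) * quadPhase M w * sgn (dotp y (M *ᵥ w + Mᵀ *ᵥ w)) := by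
    have hq : quadPhase M y * quadPhase M y = 1 := sgn_mul_self _
    rw [quadPhase_add, dotp_eq_dotProduct (y + w), add_dotProduct, ← dotp_eq_dotProduct,
      ← dotp_eq_dotProduct, sgn_add]
    linear_combination (sgn (dotp w α) * quadPhase M w * sgn (dotp y (M *ᵥ w + Mᵀ *ᵥ w))) *
      (sgn (dotp y α) * sgn (dotp y α) * hq + sgn_mul_self (dotp y α))
  calc walsh (quadPhase M) α ^ 2
      = (2 ^ n)⁻¹ ^ 2 * ∑ y, ∑ w, sgn (dotp w α) * quadPhase M w *
          sgn (dotp y (M *ᵥ w + Mᵀ *ᵥ w)) := by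
        rw [walsh, mul_pow, sq (∑ y, _), sum_mul_sum]
        congr 1
        refine sum_congr rfl fun y _ => ?_
        rw [← Equiv.sum_comp (Equiv.addLeft y)]
        exact sum_congr rfl fun w _ => hterm y w
    _ = (2 ^ n)⁻¹ ^ 2 * ∑ w, sgn (dotp w α) * quadPhase M w *
          (if Mᵀ *ᵥ w = M *ᵥ w then 2 ^ n else 0) := by
        rw [sum_comm]
        simp only [← mul_sum, sum_sgn_dotp_mulVec_add_transpose]
    _ = walsh (fun w => if Mᵀ *ᵥ w = M *ᵥ w then quadPhase M w else 0) α := by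
        rw [walsh, sq, mul_assoc, mul_sum]
        refine congrArg _ (sum_congr rfl fun w _ => ?_)
        split_ifs
        · field_simp
        · simp

lemma symp_graph (M : Matrix (Fin n) (Fin n) (ZMod 2)) (w y α : BV n) :
    symp (w, M *ᵥ w) (y, Mᵀ *ᵥ y + α) = dotp w α := by
  simp only [symp, dotp_eq_dotProduct]
  rw [dotProduct_add, dotProduct_mulVec, vecMul_transpose,
    dotProduct_comm (M *ᵥ w), add_right_comm, ZModModule.add_self, zero_add]

noncomputable def graphCoeff (f : Pt n → ℝ) (M : Matrix (Fin n) (Fin n) (ZMod 2)) (α : BV n) :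
    ℝ :=
  (2 ^ n)⁻¹ * ∑ y, f (y, Mᵀ *ᵥ y + α)

lemma graphCoeff_nonneg {f : Pt n → ℝ} (hf : ∀ z, 0 ≤ f z) (M : Matrix (Fin n) (Fin n) (ZMod 2))
    (α : BV n) : 0 ≤ graphCoeff f M α :=
  mul_nonneg (by positivity) (sum_nonneg fun _ _ => hf _)

lemma sum_graphCoeff (f : Pt n → ℝ) (M : Matrix (Fin n) (Fin n) (ZMod 2)) :
    ∑ α, graphCoeff f M α = (2 ^ n)⁻¹ * ∑ z, f z := by
  simp only [graphCoeff, ← mul_sum, Fintype.sum_prod_type]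
  rw [sum_comm]
  congr 1
  exact sum_congr rfl fun y _ => Equiv.sum_comp (Equiv.addLeft (Mᵀ *ᵥ y)) fun α => f (y, α)

lemma apply_graph_eq_sum_graphCoeff {f : Pt n → ℝ}
    (hinv : ∀ z : Pt n, f z = (1 / 2 ^ n : ℝ) * ∑ z' : Pt n, sgn (symp z z') * f z')
    (M : Matrix (Fin n) (Fin n) (ZMod 2)) (w : BV n) :
    f (w, M *ᵥ w) = ∑ α, sgn (dotp w α) * graphCoeff f M α := by
  rw [hinv, Fintype.sum_prod_type, one_div]
  simp only [graphCoeff, mul_sum]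
  conv_rhs => rw [sum_comm]
  refine sum_congr rfl fun y _ => ?_
  rw [← Equiv.sum_comp (Equiv.addLeft (Mᵀ *ᵥ y))]
  refine sum_congr rfl fun α _ => ?_
  rw [Equiv.coe_addLeft, symp_graph]
  ring

lemma apply_graph_mul_quadPhase {f : Pt n → ℝ} (hzero : ∀ y α : BV n, dotp y α = 1 → f (y, α) = 0)
    (M : Matrix (Fin n) (Fin n) (ZMod 2)) (y : BV n) :
    f (y, M *ᵥ y) * quadPhase M y = f (y, M *ᵥ y) := by
  rcases zmod_two_eq_zero_or_one (dotp y (M *ᵥ y)) with hq | hq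
  · rw [quadPhase, hq, sgn_zero, mul_one]
  · rw [hzero y _ hq, zero_mul]

theorem sq_sum_graph_le {f : Pt n → ℝ} (hf : ∀ z, 0 ≤ f z)
    (hzero : ∀ y α : BV n, dotp y α = 1 → f (y, α) = 0)
    (hinv : ∀ z : Pt n, f z = (1 / 2 ^ n : ℝ) * ∑ z' : Pt n, sgn (symp z z') * f z')
    (hnorm : (1 / 2 ^ n : ℝ) * ∑ z : Pt n, f z = 1) (M : Matrix (Fin n) (Fin n) (ZMod 2)) :
    (∑ y, f (y, M *ᵥ y)) ^ 2 ≤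
      2 ^ n * ∑ w, if Mᵀ *ᵥ w = M *ᵥ w then f (w, M *ᵥ w) else 0 := by
  have hR := apply_graph_eq_sum_graphCoeff hinv M
  have hmass : ∑ α, graphCoeff f M α = 1 := by rw [sum_graphCoeff, ← one_div, hnorm]
  have hfirst : ∑ α, graphCoeff f M α * walsh (quadPhase M) α =
      (2 ^ n)⁻¹ * ∑ y, f (y, M *ᵥ y) := by
    simp only [sum_mul_walsh hR, apply_graph_mul_quadPhase hzero]
  have hsecond : ∑ α, graphCoeff f M α * walsh (quadPhase M) α ^ 2 =
      (2 ^ n)⁻¹ * ∑ w, if Mᵀ *ᵥ w = M *ᵥ w then f (w, M *ᵥ w) else 0 := by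
    simp only [walsh_quadPhase_sq, sum_mul_walsh hR, mul_ite, mul_zero,
      apply_graph_mul_quadPhase hzero]
  have hjensen := sum_sq_le_sum_mul_sum_of_sq_le_mul univ
    (fun α _ => graphCoeff_nonneg hf M α)
    (fun α _ => mul_nonneg (graphCoeff_nonneg hf M α) (sq_nonneg (walsh (quadPhase M) α)))
    (fun α _ => (by ring : (graphCoeff f M α * walsh (quadPhase M) α) ^ 2 = _).le)
  rw [hfirst, hmass, hsecond, one_mul, mul_pow] at hjensen
  field_simp at hjensen
  linarith

end

theorem stmt11_general (n : ℕ) (η : ℝ) (f : Pt n → ℝ) (hf : ∀ z, 0 ≤ f z)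
    (ℓ : BV n →ₗ[ZMod 2] BV n)
    (hsum : ∑ y : BV n, f (y, ℓ y) = η * 2 ^ n)
    (hzero : ∀ y α : BV n, dotp y α = 1 → f (y, α) = 0)
    (hinv : ∀ z : Pt n, f z = (1 / 2 ^ n : ℝ) * ∑ z' : Pt n, sgn (symp z z') * f z')
    (hnorm : (1 / 2 ^ n : ℝ) * ∑ z : Pt n, f z = 1) :
    ∃ ℓ' : BV n →ₗ[ZMod 2] BV n,
      (∀ x y : BV n, dotp x (ℓ' y) = dotp (ℓ' x) y) ∧
      η ^ 2 * 2 ^ n ≤ ∑ y : BV n, f (y, ℓ' y) := by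
  set M := LinearMap.toMatrix' ℓ
  obtain ⟨S, hS, hSM⟩ := M.exists_isSymm_mulVec_eq
  refine ⟨toLin' S, dotp_toLin'_of_isSymm hS, ?_⟩
  have hsumM : ∑ y, f (y, M *ᵥ y) = η * 2 ^ n := by simpa only [M, LinearMap.toMatrix'_mulVec]
  have hkey := sq_sum_graph_le hf hzero hinv hnorm M
  rw [hsumM] at hkey
  have hrestrict : (∑ w, if Mᵀ *ᵥ w = M *ᵥ w then f (w, M *ᵥ w) else 0) ≤
      ∑ y, f (y, toLin' S y) := by
    refine sum_le_sum fun w _ => ?_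
    split_ifs with hw
    · rw [toLin'_apply, hSM w hw]
    · exact hf _
  refine le_trans (le_of_mul_le_mul_left ?_ (by positivity : (0 : ℝ) < 2 ^ n)) hrestrict
  linear_combination hkey

/-- Symmetrization step: if `f ≥ 0` has bounded fibers, satisfies the symplectic Fourier
inversion identity and normalization, vanishes on `⟨y,α⟩ = 1`, and a linear map `ℓ`
satisfies `Σ_y f(y, ℓ y) = η·2^n`, then there is a symmetric linear map `ℓ'` with
`Σ_y f(y, ℓ' y) ≥ η²·2^n`. -/
theorem stmt11 (n : ℕ) (C η : ℝ) (f : Pt n → ℝ) (hf : ∀ z, 0 ≤ f z)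
    (ℓ : BV n →ₗ[ZMod 2] BV n)
    (hbound : ∀ y : BV n, ∑ α : BV n, f (y, α) ≤ C)
    (hsum : ∑ y : BV n, f (y, ℓ y) = η * 2 ^ n)
    (hzero : ∀ y α : BV n, dotp y α = 1 → f (y, α) = 0)
    (hinv : ∀ z : Pt n, f z = (1 / 2 ^ n : ℝ) * ∑ z' : Pt n, sgn (symp z z') * f z')
    (hnorm : (1 / 2 ^ n : ℝ) * ∑ z : Pt n, f z = 1) :
    ∃ ℓ' : BV n →ₗ[ZMod 2] BV n,
      (∀ x y : BV n, dotp x (ℓ' y) = dotp (ℓ' x) y) ∧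
      η ^ 2 * 2 ^ n ≤ ∑ y : BV n, f (y, ℓ' y) :=
  stmt11_general n η f hf ℓ hsum hzero hinv hnorm
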